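/- Every prismatic graph of parallel-square type admits a hitting set of its triangles of cardinality at most 4. -/

import Mathlib

/-- A graph is prismatic if for every triangle, every vertex not in the triangle
has exactly one neighbour in the triangle. -/
def Prismatic {V : Type*} (G : SimpleGraph V) : Prop :=
  ∀ a b c v : V, G.Adj a b → G.Adj a c → G.Adj b c →
    v ≠ a → v ≠ b → v ≠ c → ∃! u, u ∈ ({a, b, c} : Set V) ∧ G.Adj v u

/-- The line graph of K_{3,3}: vertices are the edges (i,j) of K_{3,3}; two edges are
adjacent iff they are distinct and share an endpoint. -/
def LineK33 : SimpleGraph (Fin 3 × Fin 3) where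
  Adj e f := e ≠ f ∧ (e.1 = f.1 ∨ e.2 = f.2)
  symm := ⟨by
    rintro e f ⟨h1, h2⟩
    exact ⟨h1.symm, h2.imp Eq.symm Eq.symm⟩⟩
  loopless := ⟨fun e h => h.1 rfl⟩

/-!
Take as hitting set the vertices lying over the four neighbours of z in the line graph of K_{3,3};
there is exactly one such vertex per neighbour. A triangle avoiding them cannot use z either, since all
neighbours of z are such vertices, so it lies over the square X. But three distinct cells of X induce a
path in the line graph, so the multiplication rule forces φ to be equal along the path and different
at its ends.
-/

/-- Adjacency, after multiplying the vertices `e` and `f` of `H`, between a copy of `e` with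
`φ`-value `m` and a copy of `f` with `φ`-value `n`. -/
def MultipliedAdj {V : Type*} (H : SimpleGraph V) (e f : V) (m n : ℤ) : Prop :=
  e ≠ f ∧ ((H.Adj e f ∧ m = n) ∨ (¬ H.Adj e f ∧ m ≠ n))

instance : DecidableRel LineK33.Adj := fun e f =>
  inferInstanceAs (Decidable (e ≠ f ∧ (e.1 = f.1 ∨ e.2 = f.2)))

theorem lineK33_degree (e : Fin 3 × Fin 3) : LineK33.degree e = 4 := by
  revert e
  decide

theorem fin_three_eq_or_eq_or_eq {k₁ k₂ k₃ : Fin 3} (h₁₂ : k₁ ≠ k₂) (h₃₁ : k₃ ≠ k₁)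
    (h₃₂ : k₃ ≠ k₂) (k : Fin 3) : k = k₁ ∨ k = k₂ ∨ k = k₃ := by
  omega

def lineK33Square (i₁ i₂ j₁ j₂ : Fin 3) : Set (Fin 3 × Fin 3) :=
  {(i₁, j₁), (i₁, j₂), (i₂, j₁), (i₂, j₂)}

section ParallelSquare

variable {i₁ i₂ i₃ j₁ j₂ j₃ : Fin 3}

theorem lineK33_adj_iff_not_mem_square (hi : i₁ ≠ i₂ ∧ i₃ ≠ i₁ ∧ i₃ ≠ i₂)
    (hj : j₁ ≠ j₂ ∧ j₃ ≠ j₁ ∧ j₃ ≠ j₂) {c : Fin 3 × Fin 3} (hc : c ≠ (i₃, j₃)) :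
    LineK33.Adj (i₃, j₃) c ↔ c ∉ lineK33Square i₁ i₂ j₁ j₂ := by
  obtain ⟨hi₁₂, hi₃₁, hi₃₂⟩ := hi
  obtain ⟨hj₁₂, hj₃₁, hj₃₂⟩ := hj
  obtain ⟨a, b⟩ := c
  rcases fin_three_eq_or_eq_or_eq hi₁₂ hi₃₁ hi₃₂ a with rfl | rfl | rfl <;>
    rcases fin_three_eq_or_eq_or_eq hj₁₂ hj₃₁ hj₃₂ b with rfl | rfl | rfl <;>
      simp_all [LineK33, lineK33Square, Prod.ext_iff, eq_comm]

theorem not_multipliedAdj_triangle_of_mem_square (hi : i₁ ≠ i₂) (hj : j₁ ≠ j₂)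
    {a b c : Fin 3 × Fin 3} (ha : a ∈ lineK33Square i₁ i₂ j₁ j₂)
    (hb : b ∈ lineK33Square i₁ i₂ j₁ j₂) (hc : c ∈ lineK33Square i₁ i₂ j₁ j₂) {x y w : ℤ}
    (hab : MultipliedAdj LineK33 a b x y) (hac : MultipliedAdj LineK33 a c x w)
    (hbc : MultipliedAdj LineK33 b c y w) : False := by
  simp only [lineK33Square, Set.mem_insert_iff, Set.mem_singleton_iff] at ha hb hc
  rcases ha with rfl | rfl | rfl | rfl <;>
    rcases hb with rfl | rfl | rfl | rfl <;>
      rcases hc with rfl | rfl | rfl | rfl <;>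
        simp_all [MultipliedAdj, LineK33, Prod.ext_iff] <;> omega

end ParallelSquare

/-- The multiplied graph `G` is encoded by the projection `π` of its vertices onto the vertices
`(i, j)` (edges of K_{3,3}) of `LineK33` and by the labels `φ`; `z = (i₃, j₃)`. -/
theorem parallel_square_hitting_card_le_four_general {W : Type*}
    (i₁ i₂ i₃ j₁ j₂ j₃ : Fin 3)
    (hi : i₁ ≠ i₂ ∧ i₃ ≠ i₁ ∧ i₃ ≠ i₂) (hj : j₁ ≠ j₂ ∧ j₃ ≠ j₁ ∧ j₃ ≠ j₂)
    (X : Set (Fin 3 × Fin 3))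
    (hX : X = {(i₁, j₁), (i₁, j₂), (i₂, j₁), (i₂, j₂)})
    (G : SimpleGraph W) (π : W → Fin 3 × Fin 3) (φ : W → ℤ)
    (hπ : ∀ v : Fin 3 × Fin 3, v ∉ X → v ≠ (i₃, j₃) → ∃! w : W, π w = v)
    (hadj₁ : ∀ w w' : W, (π w ∉ X ∨ π w' ∉ X) →
      (G.Adj w w' ↔ LineK33.Adj (π w) (π w')))
    (hadj₂ : ∀ w w' : W, π w ∈ X → π w' ∈ X →
      (G.Adj w w' ↔ (π w ≠ π w' ∧
        ((LineK33.Adj (π w) (π w') ∧ φ w = φ w') ∨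
         (¬ LineK33.Adj (π w) (π w') ∧ φ w ≠ φ w'))))) :
    ∃ S : Finset W, S.card ≤ 4 ∧
      ∀ p q r : W, G.Adj p q → G.Adj p r → G.Adj q r →
        (p ∈ S ∨ q ∈ S ∨ r ∈ S) := by
  change X = lineK33Square i₁ i₂ j₁ j₂ at hX
  subst hX
  set N := LineK33.neighborFinset (i₃, j₃)
  have hN : ∀ c ∈ N, c ∉ lineK33Square i₁ i₂ j₁ j₂ ∧ c ≠ (i₃, j₃) := fun c hc =>
    have hc' := (LineK33.mem_neighborFinset _ _).1 hc
    ⟨(lineK33_adj_iff_not_mem_square hi hj hc'.ne').1 hc', hc'.ne'⟩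
  have hinj : Set.InjOn π (π ⁻¹' N) := fun a ha b _ hab =>
    (hπ _ (hN _ ha).1 (hN _ ha).2).unique rfl hab.symm
  refine ⟨N.preimage π hinj, ?_, fun p q r hpq hpr hqr => ?_⟩
  · calc (N.preimage π hinj).card ≤ N.card :=
          Finset.card_le_card_of_injOn π (fun _ => Finset.mem_preimage.1)
            (by rwa [Finset.coe_preimage])
      _ = 4 := lineK33_degree _
  by_contra! hpqr
  simp only [Finset.mem_preimage, N, SimpleGraph.mem_neighborFinset] at hpqr
  have over_square : ∀ w w', G.Adj w w' → ¬ LineK33.Adj (i₃, j₃) (π w) →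
      ¬ LineK33.Adj (i₃, j₃) (π w') → π w ∈ lineK33Square i₁ i₂ j₁ j₂ := by
    intro w w' hww' hw hw'
    by_contra hwX
    by_cases hwz : π w = (i₃, j₃)
    · exact hw' (hwz ▸ (hadj₁ w w' (.inl hwX)).1 hww')
    · exact hw ((lineK33_adj_iff_not_mem_square hi hj hwz).2 hwX)
  have hp := over_square p q hpq hpqr.1 hpqr.2.1
  have hq := over_square q r hqr hpqr.2.1 hpqr.2.2
  have hr := over_square r p hpr.symm hpqr.2.2 hpqr.1
  exact not_multipliedAdj_triangle_of_mem_square hi.1 hj.1 hp hq hr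
    ((hadj₂ p q hp hq).1 hpq) ((hadj₂ p r hp hr).1 hpr) ((hadj₂ q r hq hr).1 hqr)

/-- Every prismatic graph of parallel-square type admits a hitting set of the triangles
of cardinality at most 4.  Here X is the edge set of a 4-cycle of K_{3,3} (given by rows
i₁ ≠ i₂ and columns j₁ ≠ j₂), z = (i₃,j₃) is the edge of K_{3,3} disjoint from X, and
G is obtained from the line graph of K_{3,3} by multiplying X (encoded by the projection
π : W → Fin 3 × Fin 3 and integer map φ), possibly deleting z (the fibre over z has at
most one element, all other fibres over vertices outside X are singletons). -/
theorem parallel_square_hitting_card_le_four {W : Type*}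
    (i₁ i₂ i₃ j₁ j₂ j₃ : Fin 3)
    (hi : i₁ ≠ i₂ ∧ i₃ ≠ i₁ ∧ i₃ ≠ i₂) (hj : j₁ ≠ j₂ ∧ j₃ ≠ j₁ ∧ j₃ ≠ j₂)
    (X : Set (Fin 3 × Fin 3))
    (hX : X = {(i₁, j₁), (i₁, j₂), (i₂, j₁), (i₂, j₂)})
    (G : SimpleGraph W) (π : W → Fin 3 × Fin 3) (φ : W → ℤ)
    (hπ : ∀ v : Fin 3 × Fin 3, v ∉ X → v ≠ (i₃, j₃) → ∃! w : W, π w = v)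
    (hz : ∀ w w' : W, π w = (i₃, j₃) → π w' = (i₃, j₃) → w = w')
    (hφ : ∀ w w' : W, π w = π w' → φ w = φ w' → w = w')
    (hadj₁ : ∀ w w' : W, (π w ∉ X ∨ π w' ∉ X) →
      (G.Adj w w' ↔ LineK33.Adj (π w) (π w')))
    (hadj₂ : ∀ w w' : W, π w ∈ X → π w' ∈ X →
      (G.Adj w w' ↔ (π w ≠ π w' ∧
        ((LineK33.Adj (π w) (π w') ∧ φ w = φ w') ∨
         (¬ LineK33.Adj (π w) (π w') ∧ φ w ≠ φ w')))))
    (hG : Prismatic G) :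
    ∃ S : Finset W, S.card ≤ 4 ∧
      ∀ p q r : W, G.Adj p q → G.Adj p r → G.Adj q r →
        (p ∈ S ∨ q ∈ S ∨ r ∈ S) :=
  parallel_square_hitting_card_le_four_general i₁ i₂ i₃ j₁ j₂ j₃ hi hj X hX G π φ hπ hadj₁ hadj₂
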